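/- arXiv:1904.11665 — 3 statements merged into one kernel-verified Lean document; each statement's English description precedes it below -/
import Mathlib

section
/- If μ is a compactly supported probability measure on [0,∞) with support contained in [0, λ*], then for λ > λ*, the function φ(λ) = √λ · ∫ 1/(t − λ) dμ(t) is strictly increasing in λ. -/
open MeasureTheory

theorem integral_lt_integral_of_ae_lt {α : Type*} [MeasurableSpace α] {μ : Measure α} [NeZero μ]
    {f g : α → ℝ} (hf : Integrable f μ) (hg : Integrable g μ) (hfg : ∀ᵐ x ∂μ, f x < g x) :
    ∫ x, f x ∂μ < ∫ x, g x ∂μ := by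
  rw [← sub_pos, ← integral_sub hg hf,
    integral_pos_iff_support_of_nonneg_ae (hfg.mono fun x hx => (sub_pos.2 hx).le) (hg.sub hf),
    pos_iff_ne_zero]
  intro h_null
  obtain ⟨x, hx_notMem, hx_lt⟩ := ((measure_eq_zero_iff_ae_notMem.1 h_null).and hfg).exists
  exact hx_notMem (sub_pos.2 hx_lt).ne'

theorem integrable_inv_sub_of_ae_le {μ : Measure ℝ} [IsFiniteMeasure μ] {c l : ℝ}
    (hc : ∀ᵐ t ∂μ, t ≤ c) (hcl : c < l) : Integrable (fun t => (t - l)⁻¹) μ := by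
  refine Integrable.mono' (integrable_const (l - c)⁻¹)
    (measurable_id.sub_const l).inv.aestronglyMeasurable ?_
  filter_upwards [hc] with t ht
  rw [Real.norm_eq_abs, abs_inv, abs_of_neg (by linarith), neg_sub]
  exact inv_anti₀ (by linarith) (by linarith)

theorem strictMonoOn_sqrt_mul_inv_sub {t : ℝ} (ht : 0 ≤ t) :
    StrictMonoOn (fun l => Real.sqrt l * (t - l)⁻¹) (Set.Ioi t) := by
  intro a ha b hb hab
  have ha0 : 0 < a := ht.trans_lt ha
  have hxy : Real.sqrt a < Real.sqrt b := Real.sqrt_lt_sqrt ha0.le hab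
  have hx0 : 0 < Real.sqrt a := Real.sqrt_pos.2 ha0
  -- with x = √a < y = √b this reads y (x² - t) < x (y² - t), i.e. -xy < t
  have hcross : Real.sqrt b * (a - t) < Real.sqrt a * (b - t) := by
    nlinarith [Real.sq_sqrt ha0.le, Real.sq_sqrt (ha0.trans hab).le, mul_pos hx0 (sub_pos.2 hxy)]
  show Real.sqrt a * (t - a)⁻¹ < Real.sqrt b * (t - b)⁻¹
  rw [← neg_sub a t, ← neg_sub b t, inv_neg, inv_neg, mul_neg, mul_neg, neg_lt_neg_iff,
    ← div_eq_mul_inv, ← div_eq_mul_inv]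
  exact (div_lt_div_iff₀ (sub_pos.2 hb) (sub_pos.2 ha)).2 hcross

theorem stmt_3 (μ : Measure ℝ) [IsProbabilityMeasure μ] (lstar : ℝ)
    (hsupp : μ (Set.Icc 0 lstar)ᶜ = 0) :
    StrictMonoOn (fun l : ℝ => Real.sqrt l * ∫ t, (t - l)⁻¹ ∂μ) (Set.Ioi lstar) := by
  intro a ha b hb hab
  have hae : ∀ᵐ t ∂μ, t ∈ Set.Icc 0 lstar := ae_iff.2 hsupp
  have hle : ∀ᵐ t ∂μ, t ≤ lstar := hae.mono fun t ht => ht.2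
  simp only [← integral_const_mul]
  refine integral_lt_integral_of_ae_lt ((integrable_inv_sub_of_ae_le hle ha).const_mul _)
    ((integrable_inv_sub_of_ae_le hle hb).const_mul _) ?_
  filter_upwards [hae] with t ⟨ht0, htl⟩
  exact strictMonoOn_sqrt_mul_inv_sub ht0 (htl.trans_lt ha) (htl.trans_lt hb) hab
end

section
/- Fix λ > 0 and suppose G : I → ℝ satisfies G(e) < λ/a* on an interval I, with G' < 0, G'' > 0, G⁽³⁾ < 0 on I, where a* = max aᵢ. Then F_λ(e) = e − Σᵢ aᵢωᵢ/(aᵢG(e) − λ) is strictly convex on I: its second derivative G''(e)Σᵢ ωᵢ(aᵢ/(aᵢG(e)−λ))² − 2G'(e)² Σᵢ ωᵢ(aᵢ/(aᵢG(e)−λ))³ is positive. -/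
/-!
Every ratio `xᵢ = aᵢ / (aᵢ G(e) - λ)` is negative, because `aᵢ G(e) ≤ a* G(e) < λ` when `G(e) > 0`
and `aᵢ G(e) ≤ 0 < λ` otherwise. Hence `G''(e) Σ ωᵢ xᵢ²` is positive while `-2 G'(e)² Σ ωᵢ xᵢ³`
is nonnegative.
-/

open Finset

lemma mul_lt_of_le_of_lt_div {a b x l : ℝ} (ha : 0 < a) (hab : a ≤ b) (hl : 0 < l)
    (hx : x < l / b) : a * x < l := by
  rcases le_or_gt x 0 with hx₀ | hx₀
  · exact (mul_nonpos_of_nonneg_of_nonpos ha.le hx₀).trans_lt hl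
  · calc a * x ≤ b * x := by gcongr
      _ < l := (lt_div_iff₀' (ha.trans_le hab)).1 hx

section WeightedSums

variable {ι : Type*} [Fintype ι] [Nonempty ι] {w x : ι → ℝ}

lemma sum_mul_sq_pos (hw : ∀ i, 0 < w i) (hx : ∀ i, x i ≠ 0) :
    0 < ∑ i, w i * x i ^ 2 :=
  sum_pos (fun i _ => mul_pos (hw i) (sq_pos_of_ne_zero (hx i))) univ_nonempty

lemma sum_mul_odd_pow_neg {n : ℕ} (hn : Odd n) (hw : ∀ i, 0 < w i) (hx : ∀ i, x i < 0) :
    ∑ i, w i * x i ^ n < 0 :=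
  sum_neg (fun i _ => mul_neg_of_pos_of_neg (hw i) (hn.pow_neg (hx i))) univ_nonempty

end WeightedSums

theorem stmt_12_general (p : ℕ) (a w : Fin p → ℝ)
    (ha : ∀ i, 0 < a i) (hw : ∀ i, 0 < w i)
    (astar : ℝ) (hastar : IsGreatest (Set.range a) astar)
    (l : ℝ) (hl : 0 < l) (I : Set ℝ) (G : ℝ → ℝ)
    (hG : ∀ e ∈ I, G e < l / astar)
    (hG'' : ∀ e ∈ I, 0 < deriv (deriv G) e) :
    ∀ e ∈ I,
      0 < deriv (deriv G) e * (∑ i, w i * (a i / (a i * G e - l)) ^ 2)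
          - 2 * (deriv G e) ^ 2 * (∑ i, w i * (a i / (a i * G e - l)) ^ 3) := by
  intro e he
  obtain ⟨j, -⟩ := hastar.1
  have : Nonempty (Fin p) := ⟨j⟩
  have hx : ∀ i, a i / (a i * G e - l) < 0 := fun i =>
    div_neg_of_pos_of_neg (ha i)
      (sub_neg.2 (mul_lt_of_le_of_lt_div (ha i) (hastar.2 ⟨i, rfl⟩) hl (hG e he)))
  have hsq := mul_pos (hG'' e he) (sum_mul_sq_pos hw fun i => (hx i).ne)
  have hcube : 2 * deriv G e ^ 2 * ∑ i, w i * (a i / (a i * G e - l)) ^ 3 ≤ 0 :=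
    mul_nonpos_of_nonneg_of_nonpos (by positivity)
      (sum_mul_odd_pow_neg (by decide) hw hx).le
  linarith

theorem stmt_12 (p : ℕ) (hp : 0 < p) (a w : Fin p → ℝ)
    (ha : ∀ i, 0 < a i) (hw : ∀ i, 0 < w i) (hsum : ∑ i, w i = 1)
    (astar : ℝ) (hastar : IsGreatest (Set.range a) astar)
    (l : ℝ) (hl : 0 < l) (I : Set ℝ) (G : ℝ → ℝ)
    (hG : ∀ e ∈ I, G e < l / astar)
    (hG' : ∀ e ∈ I, deriv G e < 0)
    (hG'' : ∀ e ∈ I, 0 < deriv (deriv G) e)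
    (hG''' : ∀ e ∈ I, deriv (deriv (deriv G)) e < 0) :
    ∀ e ∈ I,
      0 < deriv (deriv G) e * (∑ i, w i * (a i / (a i * G e - l)) ^ 2)
          - 2 * (deriv G e) ^ 2 * (∑ i, w i * (a i / (a i * G e - l)) ^ 3) :=
  stmt_12_general p a w ha hw astar hastar l hl I G hG hG''
end

section
/- Under the same assumptions (G(e) < λ/a*, G' < 0, G'' > 0, G⁽³⁾ < 0 on I), the third derivative of F_λ(e) = e − Σᵢ aᵢωᵢ/(aᵢG(e) − λ) is negative on I; equivalently, R_λ(e) = F_λ'(e) is concave on I. -/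
/-! With `rᵢ = aᵢ / (aᵢ G(e) − λ)`, the bound `G(e) < λ / a*` makes every `rᵢ` negative, so the
weighted power sums `Σ ωᵢ rᵢ ^ k` are positive for `k = 2, 4` and negative for `k = 3`. Together with
the signs of `G'`, `G''`, `G⁽³⁾`, each of the three terms of `F_λ'''(e)` is then negative. -/

lemma mul_sub_neg_of_lt_div_of_le {a b g l : ℝ} (ha : 0 < a) (hab : a ≤ b) (hl : 0 ≤ l)
    (hg : g < l / b) : a * g - l < 0 := by
  have hga : g < l / a := hg.trans_le (div_le_div_of_nonneg_left hl ha hab)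
  linarith [(lt_div_iff₀' ha).1 hga]

section WeightedPowerSum

variable {ι : Type*} {s : Finset ι} {w r : ι → ℝ}

lemma sum_mul_pow_pos_of_even (hs : s.Nonempty) (hw : ∀ i ∈ s, 0 < w i) (hr : ∀ i ∈ s, r i < 0)
    {n : ℕ} (hn : Even n) : 0 < ∑ i ∈ s, w i * r i ^ n :=
  Finset.sum_pos (fun i hi => mul_pos (hw i hi) (hn.pow_pos (hr i hi).ne)) hs

lemma sum_mul_pow_neg_of_odd (hs : s.Nonempty) (hw : ∀ i ∈ s, 0 < w i) (hr : ∀ i ∈ s, r i < 0)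
    {n : ℕ} (hn : Odd n) : ∑ i ∈ s, w i * r i ^ n < 0 :=
  Finset.sum_neg (fun i hi => mul_neg_of_pos_of_neg (hw i hi) (hn.pow_neg (hr i hi))) hs

end WeightedPowerSum

lemma third_deriv_expansion_neg {g₁ g₂ g₃ s₂ s₃ s₄ : ℝ} (h₁ : g₁ < 0) (h₂ : 0 < g₂) (h₃ : g₃ < 0)
    (hs₂ : 0 < s₂) (hs₃ : s₃ < 0) (hs₄ : 0 < s₄) :
    g₃ * s₂ - 6 * g₂ * g₁ * s₃ + 6 * g₁ ^ 3 * s₄ < 0 := by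
  have t₁ : g₃ * s₂ < 0 := mul_neg_of_neg_of_pos h₃ hs₂
  have t₂ : 0 < g₂ * g₁ * s₃ := mul_pos_of_neg_of_neg (mul_neg_of_pos_of_neg h₂ h₁) hs₃
  have t₃ : g₁ ^ 3 * s₄ < 0 := mul_neg_of_neg_of_pos (Odd.pow_neg (by decide) h₁) hs₄
  linarith

theorem stmt_13_general (p : ℕ) (hp : 0 < p) (a w : Fin p → ℝ)
    (ha : ∀ i, 0 < a i) (hw : ∀ i, 0 < w i)
    (astar : ℝ) (hastar : IsGreatest (Set.range a) astar)
    (l : ℝ) (hl : 0 < l) (I : Set ℝ) (G : ℝ → ℝ)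
    (hG : ∀ e ∈ I, G e < l / astar)
    (hG' : ∀ e ∈ I, deriv G e < 0)
    (hG'' : ∀ e ∈ I, 0 < deriv (deriv G) e)
    (hG''' : ∀ e ∈ I, deriv (deriv (deriv G)) e < 0) :
    ∀ e ∈ I,
      deriv (deriv (deriv G)) e * (∑ i, w i * (a i / (a i * G e - l)) ^ 2)
        - 6 * deriv (deriv G) e * deriv G e * (∑ i, w i * (a i / (a i * G e - l)) ^ 3)
        + 6 * (deriv G e) ^ 3 * (∑ i, w i * (a i / (a i * G e - l)) ^ 4) < 0 := by
  intro e he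
  have hr : ∀ i ∈ Finset.univ, a i / (a i * G e - l) < 0 := fun i _ =>
    div_neg_of_pos_of_neg (ha i)
      (mul_sub_neg_of_lt_div_of_le (ha i) (hastar.2 ⟨i, rfl⟩) hl.le (hG e he))
  have hne : (Finset.univ : Finset (Fin p)).Nonempty := Finset.univ_nonempty_iff.2 ⟨⟨0, hp⟩⟩
  have hw' : ∀ i ∈ Finset.univ, 0 < w i := fun i _ => hw i
  exact third_deriv_expansion_neg (hG' e he) (hG'' e he) (hG''' e he)
    (sum_mul_pow_pos_of_even hne hw' hr (by decide))
    (sum_mul_pow_neg_of_odd hne hw' hr (by decide))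
    (sum_mul_pow_pos_of_even hne hw' hr (by decide))

theorem stmt_13 (p : ℕ) (hp : 0 < p) (a w : Fin p → ℝ)
    (ha : ∀ i, 0 < a i) (hw : ∀ i, 0 < w i) (hsum : ∑ i, w i = 1)
    (astar : ℝ) (hastar : IsGreatest (Set.range a) astar)
    (l : ℝ) (hl : 0 < l) (I : Set ℝ) (G : ℝ → ℝ)
    (hG : ∀ e ∈ I, G e < l / astar)
    (hG' : ∀ e ∈ I, deriv G e < 0)
    (hG'' : ∀ e ∈ I, 0 < deriv (deriv G) e)
    (hG''' : ∀ e ∈ I, deriv (deriv (deriv G)) e < 0) :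
    ∀ e ∈ I,
      deriv (deriv (deriv G)) e * (∑ i, w i * (a i / (a i * G e - l)) ^ 2)
        - 6 * deriv (deriv G) e * deriv G e * (∑ i, w i * (a i / (a i * G e - l)) ^ 3)
        + 6 * (deriv G e) ^ 3 * (∑ i, w i * (a i / (a i * G e - l)) ^ 4) < 0 :=
  stmt_13_general p hp a w ha hw astar hastar l hl I G hG hG' hG'' hG'''
end
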